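/- Let bins $(bin_k)_{k=1}^{2^N}$ be i.i.d. on $\{1,\dots,2^L\}$ where $bin_k$ is the rank (in decreasing probability order) of an $L$-bit string drawn i.i.d. Bernoulli($p$), $0 < p \le 1/2$. Then $E[G] = 2^N \cdot E[bin_1]$ where $E[bin_1] \le 2^{L H_{1/2}(p)}$ and $E[bin_1] \ge (1 + L\ln 2)^{-1} 2^{L H_{1/2}(p)}$, so the total average guesswork satisfies $(1+L\ln 2)^{-1} 2^{N + L H_{1/2}(p)} \le E[G] \le 2^{N + L H_{1/2}(p)}$. -/

import Mathlib

/-!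
Arikan's guesswork bounds. Every string ranked at or before `x` is at least as likely as `x`, so
`(rank x + 1) √P(x) ≤ ∑ √P`, whence `E[rank + 1] ≤ (∑ √P)²`. Conversely, Cauchy–Schwarz against
the weights `1 / (rank + 1)` gives `(∑ √P)² ≤ E[rank + 1] · H_{2^L} ≤ E[rank + 1] (1 + L ln 2)`.
For i.i.d. Bernoulli(p) bits `∑ √P` factors as `(√p + √(1-p))^L`, whose square is
`2^{L H_{1/2}(p)}`.
-/

open Real

/-- Binary Rényi entropy of order 1/2. -/
noncomputable def Hhalf (p : ℝ) : ℝ :=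
  2 * Real.logb 2 (Real.sqrt p + Real.sqrt (1 - p))

open Finset

namespace Guesswork

variable {α : Type*} [Fintype α] {n : ℕ}

theorem card_filter_rank_le (rank : α ≃ Fin n) (x : α) :
    #{x' | rank x' ≤ rank x} = rank x + 1 := by
  rw [← card_map rank.toEmbedding, map_filter, map_univ_equiv]
  simp [filter_ge_eq_Iic]

theorem sum_inv_rank_succ_eq_harmonic (rank : α ≃ Fin n) :
    ∑ x, ((rank x : ℕ) + 1 : ℝ)⁻¹ = harmonic n := by
  rw [Equiv.sum_comp rank (fun j : Fin n => ((j : ℕ) + 1 : ℝ)⁻¹),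
    Fin.sum_univ_eq_sum_range (fun k => ((k : ℝ) + 1)⁻¹)]
  simp [harmonic]

theorem sum_rank_succ_mul_le_sq_sum_sqrt (rank : α ≃ Fin n) {P : α → ℝ} (hP : ∀ x, 0 ≤ P x)
    (hdec : ∀ x x', rank x ≤ rank x' → P x' ≤ P x) :
    ∑ x, ((rank x : ℕ) + 1 : ℝ) * P x ≤ (∑ x, √(P x)) ^ 2 := by
  have key : ∀ x, ((rank x : ℕ) + 1 : ℝ) * √(P x) ≤ ∑ x', √(P x') := fun x =>
    calc ((rank x : ℕ) + 1 : ℝ) * √(P x) = ∑ x' ∈ {x' | rank x' ≤ rank x}, √(P x) := by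
          rw [sum_const, card_filter_rank_le, nsmul_eq_mul]; push_cast; rfl
      _ ≤ ∑ x' ∈ {x' | rank x' ≤ rank x}, √(P x') :=
          sum_le_sum fun x' hx' => Real.sqrt_le_sqrt (hdec x' x (mem_filter.1 hx').2)
      _ ≤ ∑ x', √(P x') := sum_le_univ_sum_of_nonneg fun _ => Real.sqrt_nonneg _
  calc ∑ x, ((rank x : ℕ) + 1 : ℝ) * P x
      = ∑ x, √(P x) * (((rank x : ℕ) + 1 : ℝ) * √(P x)) := by
        refine sum_congr rfl fun x _ => ?_
        rw [mul_left_comm, Real.mul_self_sqrt (hP x)]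
    _ ≤ ∑ x, √(P x) * ∑ x', √(P x') :=
        sum_le_sum fun x _ => mul_le_mul_of_nonneg_left (key x) (Real.sqrt_nonneg _)
    _ = (∑ x, √(P x)) ^ 2 := by rw [← sum_mul, sq]

theorem sq_sum_sqrt_le_sum_rank_succ_mul_mul_harmonic (rank : α ≃ Fin n) {P : α → ℝ}
    (hP : ∀ x, 0 ≤ P x) :
    (∑ x, √(P x)) ^ 2 ≤ (∑ x, ((rank x : ℕ) + 1 : ℝ) * P x) * harmonic n := by
  rw [← sum_inv_rank_succ_eq_harmonic rank]
  refine sum_sq_le_sum_mul_sum_of_sq_le_mul _ (fun x _ => mul_nonneg (by positivity) (hP x))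
    (fun x _ => by positivity) fun x _ => le_of_eq ?_
  rw [Real.sq_sqrt (hP x)]
  field_simp

end Guesswork

theorem sum_pow_card_filter_mul_pow_card_filter {ι R : Type*} [Fintype ι] [DecidableEq ι]
    [CommSemiring R] (a b : R) :
    ∑ x : ι → Bool, a ^ #{i | x i = true} * b ^ #{i | x i = false} = (a + b) ^ Fintype.card ι := by
  have h : ∀ x : ι → Bool, a ^ #{i | x i = true} * b ^ #{i | x i = false}
      = ∏ i, (if x i = true then a else b) := fun x => by
    rw [prod_ite, prod_const, prod_const]
    simp [Bool.not_eq_true]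
  simp_rw [h]
  rw [← Fintype.prod_sum (fun (_ : ι) (j : Bool) => if j = true then a else b)]
  simp

theorem sqrt_pow_eq_pow_sqrt {a : ℝ} (ha : 0 ≤ a) (k : ℕ) : √(a ^ k) = √a ^ k := by
  rw [Real.sqrt_eq_iff_eq_sq (pow_nonneg ha k) (by positivity), ← pow_mul, mul_comm, pow_mul,
    Real.sq_sqrt ha]

theorem two_rpow_mul_Hhalf (L : ℕ) {p : ℝ} (hs : 0 < √p + √(1 - p)) :
    (2 : ℝ) ^ ((L : ℝ) * Hhalf p) = ((√p + √(1 - p)) ^ L) ^ 2 := by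
  rw [Hhalf, show (L : ℝ) * (2 * logb 2 (√p + √(1 - p))) = logb 2 (√p + √(1 - p)) * (2 * L : ℕ) by
      push_cast; ring,
    rpow_mul zero_le_two, rpow_logb two_pos one_lt_two.ne' hs, rpow_natCast, ← pow_mul, mul_comm]

theorem mac_biased_average_guesswork_general (N L : ℕ)
    (p : ℝ) (hp0 : 0 < p) (hp : p ≤ 1 / 2)
    (rank : (Fin L → Bool) ≃ Fin (2 ^ L))
    (Pw : (Fin L → Bool) → ℝ)
    (hPw : ∀ x, Pw x =
      p ^ (Finset.univ.filter fun i => x i = true).card *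
        (1 - p) ^ (Finset.univ.filter fun i => x i = false).card)
    (hdec : ∀ x x' : Fin L → Bool, rank x ≤ rank x' → Pw x' ≤ Pw x) :
    (1 + (L : ℝ) * Real.log 2)⁻¹ * (2 : ℝ) ^ ((N : ℝ) + (L : ℝ) * Hhalf p) ≤
        (2 : ℝ) ^ N * ∑ x, ((rank x : ℕ) + 1 : ℝ) * Pw x ∧
      (2 : ℝ) ^ N * ∑ x, ((rank x : ℕ) + 1 : ℝ) * Pw x ≤
        (2 : ℝ) ^ ((N : ℝ) + (L : ℝ) * Hhalf p) := by
  have hq : 0 ≤ 1 - p := by linarith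
  have hPw_nonneg : ∀ x, 0 ≤ Pw x := fun x => by
    rw [hPw]
    exact mul_nonneg (pow_nonneg hp0.le _) (pow_nonneg hq _)
  have hsum_sqrt : ∑ x, √(Pw x) = (√p + √(1 - p)) ^ L := by
    simp_rw [hPw, Real.sqrt_mul' _ (pow_nonneg hq _), sqrt_pow_eq_pow_sqrt hp0.le,
      sqrt_pow_eq_pow_sqrt hq]
    simpa using sum_pow_card_filter_mul_pow_card_filter (ι := Fin L) √p √(1 - p)
  have hrenyi : (2 : ℝ) ^ ((N : ℝ) + L * Hhalf p) = 2 ^ N * (∑ x, √(Pw x)) ^ 2 := by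
    rw [rpow_add two_pos, rpow_natCast, two_rpow_mul_Hhalf L (by positivity), hsum_sqrt]
  have hharmonic : (harmonic (2 ^ L) : ℝ) ≤ 1 + L * log 2 := by
    simpa using harmonic_le_one_add_log (2 ^ L)
  rw [hrenyi]
  constructor
  · rw [inv_mul_le_iff₀ (by positivity), mul_left_comm]
    gcongr
    calc (∑ x, √(Pw x)) ^ 2
        ≤ (∑ x, ((rank x : ℕ) + 1 : ℝ) * Pw x) * harmonic (2 ^ L) :=
          Guesswork.sq_sum_sqrt_le_sum_rank_succ_mul_mul_harmonic rank hPw_nonneg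
      _ ≤ (∑ x, ((rank x : ℕ) + 1 : ℝ) * Pw x) * (1 + L * log 2) := by
          gcongr
          exact sum_nonneg fun x _ => mul_nonneg (by positivity) (hPw_nonneg x)
      _ = (1 + L * log 2) * ∑ x, ((rank x : ℕ) + 1 : ℝ) * Pw x := mul_comm _ _
  · gcongr
    exact Guesswork.sum_rank_succ_mul_le_sq_sum_sqrt rank hPw_nonneg hdec

/-- Average guesswork of an idealized MAC with biased i.i.d. key: the bins are
i.i.d., each the rank (most-probable-first) of an `L`-bit i.i.d. Bernoulli(p)
string, so `E[G] = 2^N E[bin₁]`, and Arikan's bounds give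
`(1+L ln 2)⁻¹ 2^{N + L H_{1/2}(p)} ≤ E[G] ≤ 2^{N + L H_{1/2}(p)}`. -/
theorem mac_biased_average_guesswork (N L : ℕ) (hN : 0 < N) (hL : 0 < L)
    (p : ℝ) (hp0 : 0 < p) (hp : p ≤ 1 / 2)
    (rank : (Fin L → Bool) ≃ Fin (2 ^ L))
    (Pw : (Fin L → Bool) → ℝ)
    (hPw : ∀ x, Pw x =
      p ^ (Finset.univ.filter fun i => x i = true).card *
        (1 - p) ^ (Finset.univ.filter fun i => x i = false).card)
    (hdec : ∀ x x' : Fin L → Bool, rank x ≤ rank x' → Pw x' ≤ Pw x) :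
    (1 + (L : ℝ) * Real.log 2)⁻¹ * (2 : ℝ) ^ ((N : ℝ) + (L : ℝ) * Hhalf p) ≤
        (2 : ℝ) ^ N * ∑ x, ((rank x : ℕ) + 1 : ℝ) * Pw x ∧
      (2 : ℝ) ^ N * ∑ x, ((rank x : ℕ) + 1 : ℝ) * Pw x ≤
        (2 : ℝ) ^ ((N : ℝ) + (L : ℝ) * Hhalf p) :=
  mac_biased_average_guesswork_general N L p hp0 hp rank Pw hPw hdec
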